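/- arXiv:0810.2521 — 6 statements merged into one kernel-verified Lean document; each statement's English description precedes it below -/
import Mathlib

section
/- Let f be continuous, positive, strictly decreasing, and integrable on [0,∞) with F(s) = ∫_s^∞ f. Define, for M > 0, √(μ(M)) = (√2/2) ∫₀^M (F(s) − F(M))^{−1/2} ds (the integral being finite). Then μ(M) · f(M) ≤ 2M for all M > 0. -/
open MeasureTheory Set Filter

theorem stmt_2 (f F μ : ℝ → ℝ)
    (hcont : ContinuousOn f (Ici 0))
    (hpos : ∀ s, 0 ≤ s → 0 < f s)
    (hanti : StrictAntiOn f (Ici 0))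
    (hint : IntegrableOn f (Ici 0))
    (hone : (∫ s in Ioi (0:ℝ), f s) = 1)
    (hF : ∀ s, F s = ∫ σ in Ioi s, f σ)
    (hμnonneg : ∀ M, 0 < M → 0 ≤ μ M)
    (hμ : ∀ M, 0 < M →
      Real.sqrt (μ M) = (Real.sqrt 2 / 2) * ∫ s in (0:ℝ)..M, (F s - F M) ^ (-(1/2) : ℝ)) :
    ∀ M, 0 < M → μ M * f M ≤ 2 * M := by
  intro M hM
  set c := f M with hc
  have hc0 : 0 < c := hpos M hM.le
  -- F s - F M as an interval integral
  have hFdiff : ∀ s ∈ Icc (0:ℝ) M, F s - F M = ∫ σ in s..M, f σ := by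
    intro s hs
    rw [hF, hF, intervalIntegral.integral_of_le hs.2]
    have hsplit : Ioi s = Ioc s M ∪ Ioi M := (Set.Ioc_union_Ioi_eq_Ioi hs.2).symm
    rw [hsplit, MeasureTheory.setIntegral_union (Set.Ioc_disjoint_Ioi le_rfl)
      measurableSet_Ioi
      (hint.mono_set (fun x hx => le_trans hs.1 hx.1.le))
      (hint.mono_set (fun x hx => (hM.trans hx).le))]
    ring
  -- lower bound on F s - F M
  have hlow : ∀ s ∈ Icc (0:ℝ) M, (M - s) * c ≤ F s - F M := by
    intro s hs
    rw [hFdiff s hs]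
    have hsub : uIcc s M ⊆ Ici (0:ℝ) := by
      rw [Set.uIcc_of_le hs.2]
      exact fun x hx => le_trans hs.1 hx.1
    have h1 : IntervalIntegrable f volume s M :=
      (hint.mono_set hsub).intervalIntegrable
    calc (M - s) * c = ∫ _ in s..M, c := by
          rw [intervalIntegral.integral_const]; simp [smul_eq_mul]
      _ ≤ ∫ σ in s..M, f σ := by
          refine intervalIntegral.integral_mono_on hs.2 intervalIntegrable_const h1 ?_
          intro σ hσ
          rcases eq_or_lt_of_le hσ.2 with heq | hlt
          · rw [heq]
          · exact ((hanti.antitoneOn) (le_trans hs.1 hσ.1) (le_trans hs.1 (hσ.1.trans hσ.2))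
              hσ.2).trans_eq rfl
  set g : ℝ → ℝ := fun s => (F s - F M) ^ (-(1/2) : ℝ) with hg
  set h : ℝ → ℝ := fun s => c ^ (-(1/2) : ℝ) * (M - s) ^ (-(1/2) : ℝ) with hh
  -- pointwise comparison
  have hgh : ∀ s ∈ Icc (0:ℝ) M, g s ≤ h s := by
    intro s hs
    rcases eq_or_lt_of_le hs.2 with heq | hlt
    · have : F s - F M = 0 := by rw [heq]; ring
      simp only [hg, hh, this, heq, sub_self]
      rw [Real.zero_rpow (by norm_num)]
      positivity
    · have h1 : 0 < (M - s) * c := mul_pos (by linarith) hc0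
      have h2 : (M - s) * c ≤ F s - F M := hlow s hs
      calc g s ≤ ((M - s) * c) ^ (-(1/2) : ℝ) :=
            Real.rpow_le_rpow_of_nonpos h1 h2 (by norm_num)
        _ = h s := by
            rw [Real.mul_rpow (by linarith) hc0.le]; ring
  -- integrability of h
  have hrint : IntervalIntegrable (fun s : ℝ => (M - s) ^ (-(1/2) : ℝ)) volume 0 M := by
    have hb : IntervalIntegrable (fun x : ℝ => x ^ (-(1/2) : ℝ)) volume 0 M :=
      intervalIntegral.intervalIntegrable_rpow' (by norm_num)
    have := hb.comp_sub_left M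
    simpa using this.symm
  have hhint : IntervalIntegrable h volume 0 M := hrint.const_mul _
  -- g is nonnegative on Icc 0 M and continuous on Ico 0 M
  have hFpos : ∀ s ∈ Ico (0:ℝ) M, 0 < F s - F M := fun s hs =>
    lt_of_lt_of_le (mul_pos (by linarith [hs.2]) hc0) (hlow s ⟨hs.1, hs.2.le⟩)
  have hFcont : ContinuousOn (fun s => F s - F M) (Icc 0 M) := by
    have hsub : uIcc (0:ℝ) M ⊆ Ici (0:ℝ) := by
      rw [Set.uIcc_of_le hM.le]; exact fun x hx => hx.1
    have hp : ContinuousOn (fun s => ∫ t in s..M, f t) (uIcc 0 M) :=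
      intervalIntegral.continuousOn_primitive_interval_left (hint.mono_set hsub)
    rw [Set.uIcc_of_le hM.le] at hp
    exact hp.congr (fun s hs => hFdiff s hs)
  have hgcont : ContinuousOn g (Ico 0 M) := by
    refine ContinuousOn.rpow_const (hFcont.mono Set.Ico_subset_Icc_self) ?_
    intro s hs
    exact Or.inl (ne_of_gt (hFpos s hs))
  -- integrability of g
  have hgmeas : AEStronglyMeasurable g (volume.restrict (Ioc 0 M)) := by
    have h1 : AEStronglyMeasurable g (volume.restrict (Ioo 0 M)) :=
      (hgcont.mono Set.Ioo_subset_Ico_self).aestronglyMeasurable measurableSet_Ioo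
    rwa [MeasureTheory.Measure.restrict_congr_set Ioo_ae_eq_Ioc] at h1
  have hgint : IntervalIntegrable g volume 0 M := by
    rw [intervalIntegrable_iff_integrableOn_Ioc_of_le hM.le]
    refine Integrable.mono (hhint.1) hgmeas ?_
    filter_upwards [MeasureTheory.ae_restrict_mem measurableSet_Ioc] with s hs
    have hs' : s ∈ Icc (0:ℝ) M := ⟨hs.1.le, hs.2⟩
    have hg0 : 0 ≤ g s := by
      have : 0 ≤ F s - F M := le_trans (by nlinarith [hs'.1, hs'.2, hc0]) (hlow s hs')
      exact Real.rpow_nonneg this _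
    have hh0 : 0 ≤ h s := by
      have : (0:ℝ) ≤ M - s := by linarith [hs'.2]
      positivity
    rw [Real.norm_eq_abs, Real.norm_eq_abs, abs_of_nonneg hg0, abs_of_nonneg hh0]
    exact hgh s hs'
  -- compare integrals
  have hint_le : (∫ s in (0:ℝ)..M, g s) ≤ ∫ s in (0:ℝ)..M, h s :=
    intervalIntegral.integral_mono_on hM.le hgint hhint hgh
  -- compute the integral of (M - s)^(-1/2)
  have hcomp : (∫ s in (0:ℝ)..M, (M - s) ^ (-(1/2) : ℝ)) = 2 * Real.sqrt M := by
    rw [intervalIntegral.integral_comp_sub_left (fun x => x ^ (-(1/2) : ℝ)) M]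
    rw [sub_self, sub_zero, integral_rpow (Or.inl (by norm_num))]
    rw [Real.zero_rpow (by norm_num), Real.sqrt_eq_rpow]
    norm_num
    ring
  have hhval : (∫ s in (0:ℝ)..M, h s) = c ^ (-(1/2) : ℝ) * (2 * Real.sqrt M) := by
    rw [hh]
    rw [intervalIntegral.integral_const_mul, hcomp]
  -- bound on sqrt (μ M)
  set B : ℝ := Real.sqrt 2 * Real.sqrt M * (Real.sqrt c)⁻¹ with hB
  have hcrpow : c ^ (-(1/2) : ℝ) = (Real.sqrt c)⁻¹ := by
    rw [Real.rpow_neg hc0.le, Real.sqrt_eq_rpow]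
  have hsqrtle : Real.sqrt (μ M) ≤ B := by
    rw [hμ M hM]
    have h1 : (Real.sqrt 2 / 2) * (∫ s in (0:ℝ)..M, g s)
        ≤ (Real.sqrt 2 / 2) * (∫ s in (0:ℝ)..M, h s) :=
      mul_le_mul_of_nonneg_left hint_le (by positivity)
    calc (Real.sqrt 2 / 2) * ∫ s in (0:ℝ)..M, (F s - F M) ^ (-(1/2) : ℝ)
        ≤ (Real.sqrt 2 / 2) * ∫ s in (0:ℝ)..M, h s := h1
      _ = B := by rw [hhval, hcrpow, hB]; ring
  -- conclude
  have hB2 : B ^ 2 = 2 * M / c := by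
    rw [hB, mul_pow, mul_pow, inv_pow, Real.sq_sqrt (by norm_num : (0:ℝ) ≤ 2),
      Real.sq_sqrt hM.le, Real.sq_sqrt hc0.le, div_eq_mul_inv]
  have hμle : μ M ≤ 2 * M / c := by
    have h1 : μ M = Real.sqrt (μ M) ^ 2 := (Real.sq_sqrt (hμnonneg M hM)).symm
    rw [h1, ← hB2]
    exact pow_le_pow_left₀ (Real.sqrt_nonneg _) hsqrtle 2
  have : μ M * c ≤ 2 * M := (le_div_iff₀ hc0).mp hμle
  exact this
end

section
/- Under the same hypotheses, √(μ(M)) · f(M) → 0 as M → ∞. -/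
open MeasureTheory Set Filter

/-!
Since `f` is decreasing, `F s - F M = ∫_s^M f ≥ f(M) (M - s)`, so comparing with
`∫₀^M (M - s)^(-1/2) ds = 2√M` gives `√μ(M) ≤ √2 · √(M / f(M))`, i.e.
`√μ(M) f(M) ≤ √2 · √(M f(M))`. Finally `(M/2) f(M) ≤ ∫_{M/2}^M f = F(M/2) - F(M)`, and tails of
an integrable function vanish, so `M f(M) → 0`.
-/

lemma mul_sub_le_intervalIntegral_of_antitoneOn {f : ℝ → ℝ} {a b : ℝ} (hab : a ≤ b)
    (hf : AntitoneOn f (Icc a b)) : f b * (b - a) ≤ ∫ x in a..b, f x := by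
  have hint : IntervalIntegrable f volume a b :=
    AntitoneOn.intervalIntegrable (by rwa [uIcc_of_le hab])
  calc f b * (b - a) = ∫ _ in a..b, f b := by simp [mul_comm]
    _ ≤ ∫ x in a..b, f x := intervalIntegral.integral_mono_on hab intervalIntegrable_const hint
          fun x hx => hf hx (right_mem_Icc.2 hab) hx.2

lemma integral_sub_rpow_neg_half (a b : ℝ) :
    ∫ s in a..b, (b - s) ^ (-(1/2) : ℝ) = 2 * √(b - a) := by
  rw [intervalIntegral.integral_comp_sub_left (fun x => x ^ (-(1/2) : ℝ)), sub_self,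
    integral_rpow (Or.inl (by norm_num)), Real.zero_rpow (by norm_num), Real.sqrt_eq_rpow]
  norm_num
  ring

lemma intervalIntegral_rpow_neg_half_le {G : ℝ → ℝ} {a b c : ℝ} (hab : a ≤ b) (hc : 0 < c)
    (hG : ∀ s ∈ Ioo a b, c * (b - s) ≤ G s) :
    ∫ s in a..b, G s ^ (-(1/2) : ℝ) ≤ 2 * √(b - a) / √c := by
  have hmodel :
      IntervalIntegrable (fun s => c ^ (-(1/2) : ℝ) * (b - s) ^ (-(1/2) : ℝ)) volume a b := by
    simpa using
      ((intervalIntegral.intervalIntegrable_rpow' (a := 0) (b := b - a) (by norm_num)).comp_sub_left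
        b).symm.const_mul (c ^ (-(1/2) : ℝ))
  have hmono : ∫ s in a..b, G s ^ (-(1/2) : ℝ)
      ≤ ∫ s in a..b, c ^ (-(1/2) : ℝ) * (b - s) ^ (-(1/2) : ℝ) := by
    rw [intervalIntegral.integral_of_le hab, intervalIntegral.integral_of_le hab,
      integral_Ioc_eq_integral_Ioo, integral_Ioc_eq_integral_Ioo]
    refine integral_mono_of_nonneg ?_ (hmodel.1.mono_set Ioo_subset_Ioc_self) ?_ <;>
      filter_upwards [ae_restrict_mem measurableSet_Ioo] with s hs <;>
      have hcs : 0 < c * (b - s) := mul_pos hc (sub_pos.2 hs.2)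
    · exact Real.rpow_nonneg (hcs.le.trans (hG s hs)) _
    · rw [← Real.mul_rpow hc.le (sub_pos.2 hs.2).le]
      exact Real.rpow_le_rpow_of_nonpos hcs (hG s hs) (by norm_num)
  rw [intervalIntegral.integral_const_mul, integral_sub_rpow_neg_half] at hmono
  rwa [Real.rpow_neg hc.le, ← Real.sqrt_eq_rpow, mul_comm, ← div_eq_mul_inv] at hmono

lemma tendsto_mul_of_antitoneOn_of_integrableOn {f : ℝ → ℝ} (hnonneg : ∀ x, 0 ≤ x → 0 ≤ f x)
    (hanti : AntitoneOn f (Ici 0)) (hint : IntegrableOn f (Ici 0)) :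
    Tendsto (fun M => M * f M) atTop (nhds 0) := by
  have hhalf : Tendsto (fun M : ℝ => M / 2) atTop atTop := tendsto_id.atTop_div_const two_pos
  have htail : Tendsto (fun M => 2 * ((∫ x in Ioi (M / 2), f x) - ∫ x in Ioi M, f x))
      atTop (nhds 0) := by
    simpa using (((tendsto_integral_Ioi_zero (f := f) hhalf).sub
      (tendsto_integral_Ioi_zero tendsto_id)).const_mul (2 : ℝ))
  refine squeeze_zero' ?_ ?_ htail <;> filter_upwards [eventually_ge_atTop 0] with M hM
  · exact mul_nonneg hM (hnonneg M hM)
  · rw [intervalIntegral.integral_Ioi_sub_Ioi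
      (hint.mono_set (Ioi_subset_Ici (by positivity))) (by linarith)]
    have := mul_sub_le_intervalIntegral_of_antitoneOn (f := f) (a := M / 2) (b := M) (by linarith)
      (hanti.mono fun x hx => (show (0:ℝ) ≤ M / 2 by positivity).trans hx.1)
    linarith

theorem stmt_3_general (f F μ : ℝ → ℝ)
    (hpos : ∀ s, 0 ≤ s → 0 < f s)
    (hanti : StrictAntiOn f (Ici 0))
    (hint : IntegrableOn f (Ici 0))
    (hF : ∀ s, F s = ∫ σ in Ioi s, f σ)
    (hμ : ∀ M, 0 < M →
      Real.sqrt (μ M) = (Real.sqrt 2 / 2) * ∫ s in (0:ℝ)..M, (F s - F M) ^ (-(1/2) : ℝ)) :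
    Tendsto (fun M => Real.sqrt (μ M) * f M) atTop (nhds 0) := by
  have hgap : ∀ M, ∀ s ∈ Ioo 0 M, f M * (M - s) ≤ F s - F M := by
    intro M s hs
    rw [hF, hF, intervalIntegral.integral_Ioi_sub_Ioi (hint.mono_set (Ioi_subset_Ici hs.1.le))
      hs.2.le]
    exact mul_sub_le_intervalIntegral_of_antitoneOn hs.2.le
      (hanti.antitoneOn.mono fun x hx => hs.1.le.trans hx.1)
  have hbound : ∀ M, 0 < M → √(μ M) * f M ≤ √2 * √(M * f M) := by
    intro M hM
    have hfM := hpos M hM.le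
    have hI := intervalIntegral_rpow_neg_half_le hM.le hfM (hgap M)
    rw [sub_zero] at hI
    rw [hμ M hM]
    calc √2 / 2 * (∫ s in (0:ℝ)..M, (F s - F M) ^ (-(1/2) : ℝ)) * f M
        ≤ √2 / 2 * (2 * √M / √(f M)) * f M := by gcongr
      _ = √2 * √(M * f M) := by
        rw [Real.sqrt_mul hM.le]
        field_simp
        rw [Real.sq_sqrt hfM.le]
  have hMf := tendsto_mul_of_antitoneOn_of_integrableOn (fun x hx => (hpos x hx).le)
    hanti.antitoneOn hint
  refine squeeze_zero' ?_ ?_ (by simpa using (hMf.sqrt).const_mul √2) <;>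
    filter_upwards [eventually_gt_atTop 0] with M hM
  · exact mul_nonneg (Real.sqrt_nonneg _) (hpos M hM.le).le
  · exact hbound M hM

theorem stmt_3 (f F μ : ℝ → ℝ)
    (hcont : ContinuousOn f (Ici 0))
    (hpos : ∀ s, 0 ≤ s → 0 < f s)
    (hanti : StrictAntiOn f (Ici 0))
    (hint : IntegrableOn f (Ici 0))
    (hone : (∫ s in Ioi (0:ℝ), f s) = 1)
    (hF : ∀ s, F s = ∫ σ in Ioi s, f σ)
    (hμnonneg : ∀ M, 0 < M → 0 ≤ μ M)
    (hμ : ∀ M, 0 < M →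
      Real.sqrt (μ M) = (Real.sqrt 2 / 2) * ∫ s in (0:ℝ)..M, (F s - F M) ^ (-(1/2) : ℝ)) :
    Tendsto (fun M => Real.sqrt (μ M) * f M) atTop (nhds 0) :=
  stmt_3_general f F μ hpos hanti hint hF hμ
end

section
/- Under the same hypotheses, M / √(2 μ(M)) → 0 as M → ∞; equivalently √(2 μ(M)) / M → ∞. -/
open MeasureTheory Set Filter

/-
Since `F` is nonnegative and strictly decreasing, `0 < F s - F M ≤ F (M/4)` for `s ∈ [M/4, M/2]`,
so `√(2 μ(M)) ≥ (M/4) / √(F (M/4))`. Hence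
`M / √(2 μ(M)) ≤ 4 √(F (M/4))`, which tends to `0` because the tails of an integrable function do.
-/

section TailIntegral

variable {f : ℝ → ℝ} {a b c s t : ℝ}

theorem integral_Ioi_sub_integral_Ioi_nonneg (hf : IntegrableOn f (Ioi s))
    (hnn : ∀ x ∈ Icc s t, 0 ≤ f x) (hst : s ≤ t) :
    0 ≤ (∫ x in Ioi s, f x) - ∫ x in Ioi t, f x := by
  rw [intervalIntegral.integral_Ioi_sub_Ioi hf hst]
  exact intervalIntegral.integral_nonneg hst hnn

theorem integral_Ioi_sub_integral_Ioi_pos (hf : IntegrableOn f (Ioi s))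
    (hpos : ∀ x ∈ Ioo s t, 0 < f x) (hst : s < t) :
    0 < (∫ x in Ioi s, f x) - ∫ x in Ioi t, f x := by
  rw [intervalIntegral.integral_Ioi_sub_Ioi hf hst.le]
  refine intervalIntegral.intervalIntegral_pos_of_pos_on ?_ hpos hst
  exact (intervalIntegrable_iff_integrableOn_Ioc_of_le hst.le).2 (hf.mono_set Ioc_subset_Ioi_self)

theorem inv_sqrt_integral_Ioi_le_rpow (hf : IntegrableOn f (Ioi a))
    (hpos : ∀ x ∈ Ici a, 0 < f x) (has : a ≤ s) (hst : s < t) :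
    (√(∫ x in Ioi a, f x))⁻¹ ≤ ((∫ x in Ioi s, f x) - ∫ x in Ioi t, f x) ^ (-(1 / 2) : ℝ) := by
  have hgap := integral_Ioi_sub_integral_Ioi_pos (hf.mono_set (Ioi_subset_Ioi has))
    (fun x hx => hpos x (has.trans hx.1.le)) hst
  have hhead := integral_Ioi_sub_integral_Ioi_nonneg hf (fun x hx => (hpos x hx.1).le) has
  have htail : 0 ≤ ∫ x in Ioi t, f x :=
    setIntegral_nonneg measurableSet_Ioi fun x hx => (hpos x (has.trans (hst.trans hx).le)).le
  rw [Real.sqrt_eq_rpow, ← Real.rpow_neg (by linarith)]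
  exact Real.rpow_le_rpow_of_nonpos hgap (by linarith) (by norm_num)

theorem div_sqrt_integral_Ioi_le_integral_rpow (hf : IntegrableOn f (Ioi c))
    (hpos : ∀ x ∈ Ici c, 0 < f x) (hca : c ≤ a) (hab : a ≤ b) (hbt : b < t)
    (hg : IntervalIntegrable
      (fun s => ((∫ x in Ioi s, f x) - ∫ x in Ioi t, f x) ^ (-(1 / 2) : ℝ)) volume c t) :
    (b - a) / √(∫ x in Ioi a, f x) ≤
      ∫ s in c..t, ((∫ x in Ioi s, f x) - ∫ x in Ioi t, f x) ^ (-(1 / 2) : ℝ) := by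
  have hg_ab : IntervalIntegrable
      (fun s => ((∫ x in Ioi s, f x) - ∫ x in Ioi t, f x) ^ (-(1 / 2) : ℝ)) volume a b :=
    hg.mono_set (uIcc_subset_uIcc (mem_uIcc_of_le hca (hab.trans hbt.le))
      (mem_uIcc_of_le (hca.trans hab) hbt.le))
  have hg_nonneg : ∀ s ∈ Ioc c t,
      0 ≤ ((∫ x in Ioi s, f x) - ∫ x in Ioi t, f x) ^ (-(1 / 2) : ℝ) := fun s hs =>
    Real.rpow_nonneg (integral_Ioi_sub_integral_Ioi_nonneg (hf.mono_set (Ioi_subset_Ioi hs.1.le))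
      (fun x hx => (hpos x (hs.1.le.trans hx.1)).le) hs.2) _
  calc (b - a) / √(∫ x in Ioi a, f x) = ∫ _ in a..b, (√(∫ x in Ioi a, f x))⁻¹ := by
        rw [intervalIntegral.integral_const, smul_eq_mul, div_eq_mul_inv]
    _ ≤ ∫ s in a..b, ((∫ x in Ioi s, f x) - ∫ x in Ioi t, f x) ^ (-(1 / 2) : ℝ) :=
        intervalIntegral.integral_mono_on hab intervalIntegrable_const hg_ab fun s hs =>
          inv_sqrt_integral_Ioi_le_rpow (hf.mono_set (Ioi_subset_Ioi hca))
            (fun x hx => hpos x (hca.trans hx)) hs.1 (hs.2.trans_lt hbt)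
    _ ≤ _ := intervalIntegral.integral_mono_interval hca hab hbt.le
        ((ae_restrict_iff' measurableSet_Ioc).2 (ae_of_all _ hg_nonneg)) hg

theorem div_integral_rpow_le_four_mul_sqrt (hf : IntegrableOn f (Ioi 0))
    (hpos : ∀ x ∈ Ici 0, 0 < f x) (ht : 0 < t) :
    t / ∫ s in 0..t, ((∫ x in Ioi s, f x) - ∫ x in Ioi t, f x) ^ (-(1 / 2) : ℝ) ≤
      4 * √(∫ x in Ioi (t / 4), f x) := by
  by_cases hg : IntervalIntegrable
    (fun s => ((∫ x in Ioi s, f x) - ∫ x in Ioi t, f x) ^ (-(1 / 2) : ℝ)) volume 0 t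
  swap
  -- a non-integrable integrand has integral `0`, and `t / 0 = 0`
  · rw [intervalIntegral.integral_undef hg, div_zero]
    positivity
  have hlower := div_sqrt_integral_Ioi_le_integral_rpow hf hpos (a := t / 4) (b := t / 2)
    (by linarith) (by linarith) (by linarith) hg
  have hT : 0 < ∫ x in Ioi (t / 4), f x :=
    calc 0 < (∫ x in Ioi (t / 4), f x) - ∫ x in Ioi t, f x :=
          integral_Ioi_sub_integral_Ioi_pos (hf.mono_set (Ioi_subset_Ioi (by linarith)))
            (fun x hx => hpos x (mem_Ici.2 (by linarith [hx.1]))) (by linarith)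
      _ ≤ _ := sub_le_self _ <| setIntegral_nonneg measurableSet_Ioi fun x hx =>
          (hpos x (mem_Ici.2 (by linarith [mem_Ioi.1 hx]))).le
  rw [div_le_iff₀ (Real.sqrt_pos.2 hT)] at hlower
  rw [div_le_iff₀ (by nlinarith [Real.sqrt_pos.2 hT])]
  linarith

end TailIntegral

theorem stmt_4_general (f F μ : ℝ → ℝ)
    (hpos : ∀ s, 0 ≤ s → 0 < f s)
    (hint : IntegrableOn f (Ici 0))
    (hF : ∀ s, F s = ∫ σ in Ioi s, f σ)
    (hμ : ∀ M, 0 < M →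
      Real.sqrt (μ M) = (Real.sqrt 2 / 2) * ∫ s in (0:ℝ)..M, (F s - F M) ^ (-(1/2) : ℝ)) :
    Tendsto (fun M => M / Real.sqrt (2 * μ M)) atTop (nhds 0) := by
  obtain rfl : F = fun s => ∫ σ in Ioi s, f σ := funext hF
  have htail : Tendsto (fun M : ℝ => 4 * √(∫ x in Ioi (M / 4), f x)) atTop (nhds 0) := by
    simpa using ((tendsto_integral_Ioi_zero (f := f) (μ := volume)
      (tendsto_id.atTop_div_const (by norm_num : (0:ℝ) < 4))).sqrt).const_mul 4
  refine squeeze_zero' ?_ ?_ htail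
  · filter_upwards [eventually_ge_atTop 0] with M hM
    positivity
  filter_upwards [eventually_gt_atTop 0] with M hM
  have hsqrt : √(2 * μ M) = ∫ s in (0:ℝ)..M,
      ((∫ x in Ioi s, f x) - ∫ x in Ioi M, f x) ^ (-(1 / 2) : ℝ) := by
    rw [Real.sqrt_mul zero_le_two, hμ M hM, ← mul_assoc, mul_div_assoc',
      Real.mul_self_sqrt zero_le_two, div_self two_ne_zero, one_mul]
  rw [hsqrt]
  exact div_integral_rpow_le_four_mul_sqrt (hint.mono_set Ioi_subset_Ici_self) hpos hM

theorem stmt_4 (f F μ : ℝ → ℝ)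
    (hcont : ContinuousOn f (Ici 0))
    (hpos : ∀ s, 0 ≤ s → 0 < f s)
    (hanti : StrictAntiOn f (Ici 0))
    (hint : IntegrableOn f (Ici 0))
    (hone : (∫ s in Ioi (0:ℝ), f s) = 1)
    (hF : ∀ s, F s = ∫ σ in Ioi s, f σ)
    (hμnonneg : ∀ M, 0 < M → 0 ≤ μ M)
    (hμ : ∀ M, 0 < M →
      Real.sqrt (μ M) = (Real.sqrt 2 / 2) * ∫ s in (0:ℝ)..M, (F s - F M) ^ (-(1/2) : ℝ)) :
    Tendsto (fun M => M / Real.sqrt (2 * μ M)) atTop (nhds 0) :=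
  stmt_4_general f F μ hpos hint hF hμ
end

section
/- Let f be C¹, positive, strictly decreasing, integrable on [0,∞) with ∫₀^∞ f = 1 and s f(s) → 0 as s → ∞. If M : [t₀, T) → ℝ is increasing with M' (t) = min{ Λ/f(M(t)), −Λ/(2 M(t) f'(M(t))) } for a constant Λ > 0, and M(t) → ∞ as t → T, then T < ∞. Specifically, Λ(T − t₀) ≤ ∫_{M(t₀)}^∞ [f(s) − 2 s f'(s)] ds < ∞. -/
/-!
Write `g s = f s - 2 s f'(s)`. Since `g = 3 f - 2 (s f)'`, the function
`H s = 3 ∫₀ˢ f - 2 s f(s)` is an antiderivative of `g`; it is nondecreasing on `(0, ∞)` and tends to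
`3 ∫₀^∞ f`, so `g` is integrable on `(M t₀, ∞)` with integral `3 ∫₀^∞ f - H (M t₀)`.
Along the solution, `(H ∘ M)' = (f(M) - 2 M f'(M)) · min (Λ / f(M), Λ / (-2 M f'(M))) ≥ Λ`, because
`(x + y) min (Λ / x, Λ / y) ≥ Λ` for `x, y > 0`. Integrating from `t₀` to `t < T`, bounding `H (M t)`
by its limit and letting `t → T` gives `Λ (T - t₀) ≤ ∫_{M t₀}^∞ g`.
-/

open MeasureTheory Set Filter Topology

theorem mul_sub_le_of_hasDerivAt_of_le {φ φ' : ℝ → ℝ} {Λ t₀ T C : ℝ} (hT : t₀ < T)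
    (hφ : ∀ t ∈ Ico t₀ T, HasDerivAt φ (φ' t) t) (hφ' : ∀ t ∈ Ico t₀ T, Λ ≤ φ' t)
    (hC : ∀ t ∈ Ico t₀ T, φ t ≤ C) : Λ * (T - t₀) ≤ C - φ t₀ := by
  have hgrowth : ∀ t ∈ Ico t₀ T, Λ * (t - t₀) ≤ φ t - φ t₀ := fun t ht =>
    (convex_Ico t₀ T).mul_sub_le_image_sub_of_le_deriv
      (fun s hs => (hφ s hs).continuousAt.continuousWithinAt)
      (fun s hs => (hφ s (interior_subset hs)).differentiableAt.differentiableWithinAt)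
      (fun s hs => (hφ s (interior_subset hs)).deriv ▸ hφ' s (interior_subset hs))
      t₀ (left_mem_Ico.2 hT) t ht ht.1
  have hlim : Tendsto (fun t => Λ * (t - t₀)) (𝓝[<] T) (𝓝 (Λ * (T - t₀))) :=
    ((continuous_const.mul (continuous_id.sub continuous_const)).tendsto T).mono_left
      nhdsWithin_le_nhds
  refine le_of_tendsto hlim ?_
  filter_upwards [Ioo_mem_nhdsLT hT] with t ht
  linarith [hgrowth t (Ioo_subset_Ico_self ht), hC t (Ioo_subset_Ico_self ht)]

theorem le_sub_mul_min_div {Λ x y : ℝ} (hΛ : 0 ≤ Λ) (hx : 0 < x) (hy : y < 0) :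
    Λ ≤ (x - y) * min (Λ / x) (-(Λ / y)) := by
  rw [← div_neg]
  have hy' : 0 < -y := neg_pos.2 hy
  rcases min_cases (Λ / x) (Λ / -y) with ⟨h, -⟩ | ⟨h, -⟩ <;>
    rw [h, mul_div_assoc', le_div_iff₀ ‹_›] <;> nlinarith

/-- An antiderivative of `s ↦ f s - 2 * s * deriv f s` on `(0, ∞)`. -/
noncomputable def ibpPrimitive (f : ℝ → ℝ) (s : ℝ) : ℝ :=
  3 * (∫ u in (0 : ℝ)..s, f u) - 2 * (s * f s)

section

variable {f : ℝ → ℝ}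

theorem hasDerivAt_ibpPrimitive (hder : ∀ s, 0 ≤ s → deriv f s < 0)
    (hint : IntegrableOn f (Ici 0)) {x : ℝ} (hx : 0 < x) :
    HasDerivAt (ibpPrimitive f) (f x - 2 * x * deriv f x) x := by
  -- `deriv f s ≠ 0` forces differentiability, `deriv` being `0` elsewhere
  have hdiff : ∀ s, 0 < s → DifferentiableAt ℝ f s := fun s hs =>
    differentiableAt_of_deriv_ne_zero (hder s hs.le).ne
  have hF : HasDerivAt (fun s => ∫ u in (0 : ℝ)..s, f u) (f x) x :=
    intervalIntegral.integral_hasDerivAt_right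
      ((intervalIntegrable_iff_integrableOn_Ioc_of_le hx.le).2
        (hint.mono_set fun s hs => hs.1.le))
      (ContinuousOn.stronglyMeasurableAtFilter isOpen_Ioi
        (fun s hs => (hdiff s hs).continuousAt.continuousWithinAt) x hx)
      (hdiff x hx).continuousAt
  have hsf : HasDerivAt (fun s => s * f s) (1 * f x + x * deriv f x) x :=
    (hasDerivAt_id x).mul (hdiff x hx).hasDerivAt
  exact ((hF.const_mul 3).sub (hsf.const_mul 2)).congr_deriv (by ring)

theorem tendsto_ibpPrimitive (hint : IntegrableOn f (Ici 0))
    (hlim : Tendsto (fun s => s * f s) atTop (𝓝 0)) :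
    Tendsto (ibpPrimitive f) atTop (𝓝 (3 * ∫ s in Ioi 0, f s)) := by
  have hF := intervalIntegral_tendsto_integral_Ioi 0 (hint.mono_set Ioi_subset_Ici_self)
    tendsto_id
  have h := (hF.const_mul 3).sub (hlim.const_mul 2)
  rwa [mul_zero, sub_zero] at h

theorem sub_two_mul_deriv_pos (hpos : ∀ s, 0 ≤ s → 0 < f s)
    (hder : ∀ s, 0 ≤ s → deriv f s < 0) {x : ℝ} (hx : 0 ≤ x) :
    0 < f x - 2 * x * deriv f x := by
  nlinarith [hpos x hx, hder x hx]

theorem integrableOn_Ioi_sub_two_mul_deriv (hpos : ∀ s, 0 ≤ s → 0 < f s)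
    (hder : ∀ s, 0 ≤ s → deriv f s < 0) (hint : IntegrableOn f (Ici 0))
    (hlim : Tendsto (fun s => s * f s) atTop (𝓝 0)) {a : ℝ} (ha : 0 < a) :
    IntegrableOn (fun s => f s - 2 * s * deriv f s) (Ioi a) :=
  integrableOn_Ioi_deriv_of_nonneg'
    (fun _ hx => hasDerivAt_ibpPrimitive hder hint (ha.trans_le hx))
    (fun _ hx => (sub_two_mul_deriv_pos hpos hder (ha.trans hx).le).le)
    (tendsto_ibpPrimitive hint hlim)

theorem integral_Ioi_sub_two_mul_deriv (hpos : ∀ s, 0 ≤ s → 0 < f s)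
    (hder : ∀ s, 0 ≤ s → deriv f s < 0) (hint : IntegrableOn f (Ici 0))
    (hlim : Tendsto (fun s => s * f s) atTop (𝓝 0)) {a : ℝ} (ha : 0 < a) :
    ∫ s in Ioi a, (f s - 2 * s * deriv f s) = 3 * (∫ s in Ioi 0, f s) - ibpPrimitive f a :=
  integral_Ioi_of_hasDerivAt_of_nonneg'
    (fun _ hx => hasDerivAt_ibpPrimitive hder hint (ha.trans_le hx))
    (fun _ hx => (sub_two_mul_deriv_pos hpos hder (ha.trans hx).le).le)
    (tendsto_ibpPrimitive hint hlim)

end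

theorem stmt_16_general (f : ℝ → ℝ)
    (hpos : ∀ s, 0 ≤ s → 0 < f s)
    (hder : ∀ s, 0 ≤ s → deriv f s < 0)
    (hint : IntegrableOn f (Ici 0))
    (hlim : Tendsto (fun s => s * f s) atTop (nhds 0))
    (Λ t₀ T : ℝ) (hΛ : 0 < Λ) (ht₀T : t₀ < T)
    (M : ℝ → ℝ)
    (hMpos : ∀ t ∈ Ico t₀ T, 0 < M t)
    (hode : ∀ t ∈ Ico t₀ T,
      HasDerivAt M (min (Λ / f (M t)) (-(Λ / (2 * M t * deriv f (M t))))) t) :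
    IntegrableOn (fun s => f s - 2 * s * deriv f s) (Ioi (M t₀)) ∧
    Λ * (T - t₀) ≤ ∫ s in Ioi (M t₀), (f s - 2 * s * deriv f s) := by
  have ha : 0 < M t₀ := hMpos t₀ (left_mem_Ico.2 ht₀T)
  refine ⟨integrableOn_Ioi_sub_two_mul_deriv hpos hder hint hlim ha, ?_⟩
  rw [integral_Ioi_sub_two_mul_deriv hpos hder hint hlim ha]
  refine mul_sub_le_of_hasDerivAt_of_le (φ := ibpPrimitive f ∘ M) ht₀T
    (fun t ht => (hasDerivAt_ibpPrimitive hder hint (hMpos t ht)).comp t (hode t ht))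
    (fun t ht => ?_) (fun t ht => ?_)
  · have hMt := hMpos t ht
    exact le_sub_mul_min_div hΛ.le (hpos _ hMt.le)
      (mul_neg_of_pos_of_neg (by positivity) (hder _ hMt.le))
  · have hrest := integral_Ioi_sub_two_mul_deriv hpos hder hint hlim (hMpos t ht)
    have hnonneg : 0 ≤ ∫ s in Ioi (M t), (f s - 2 * s * deriv f s) :=
      setIntegral_nonneg measurableSet_Ioi fun s hs =>
        (sub_two_mul_deriv_pos hpos hder ((hMpos t ht).trans hs).le).le
    exact sub_nonneg.1 (hrest ▸ hnonneg)

theorem stmt_16 (f : ℝ → ℝ)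
    (hreg : ContDiff ℝ 1 f)
    (hpos : ∀ s, 0 ≤ s → 0 < f s)
    (hder : ∀ s, 0 ≤ s → deriv f s < 0)
    (hint : IntegrableOn f (Ici 0))
    (hone : (∫ s in Ioi (0:ℝ), f s) = 1)
    (hlim : Tendsto (fun s => s * f s) atTop (nhds 0))
    (Λ t₀ T : ℝ) (hΛ : 0 < Λ) (ht₀T : t₀ < T)
    (M : ℝ → ℝ)
    (hMpos : ∀ t ∈ Ico t₀ T, 0 < M t)
    (hmono : StrictMonoOn M (Ico t₀ T))
    (hode : ∀ t ∈ Ico t₀ T,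
      HasDerivAt M (min (Λ / f (M t)) (-(Λ / (2 * M t * deriv f (M t))))) t)
    (hblow : Tendsto M (nhdsWithin T (Iio T)) atTop) :
    IntegrableOn (fun s => f s - 2 * s * deriv f s) (Ioi (M t₀)) ∧
    Λ * (T - t₀) ≤ ∫ s in Ioi (M t₀), (f s - 2 * s * deriv f s) :=
  stmt_16_general f hpos hder hint hlim Λ t₀ T hΛ ht₀T M hMpos hode
end

section
/- Let f be continuous, positive, strictly decreasing, integrable on [0,∞) with F(s) = ∫_s^∞ f, and for each M > 0 let μ(M) satisfy √(μ(M)) = (√2/2)∫₀^M (F(s)−F(M))^{−1/2} ds. Then μ is strictly increasing in M and μ(M) → ∞ as M → ∞. -/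
/-!
Substituting `s = M σ` and writing `F (M σ) - F M = M ∫_σ^1 f (M τ) dτ` gives
`∫₀^M (F s - F M)^p ds = M^(1+p) J(M)` with `J(M) = ∫₀¹ (∫_σ^1 f (M τ) dτ)^p dσ`.
As `f` is decreasing, the inner integral decreases in `M`, so for `p ≤ 0` the positive factor
`J` is nondecreasing; for `p > -1` the factor `M^(1+p)` increases strictly to `∞`.
-/

open MeasureTheory Set Filter

lemma intervalIntegrable_rpow_of_mul_sub_le {g : ℝ → ℝ} {a b c p : ℝ} (hab : a ≤ b)
    (hc : 0 < c) (hp : -1 < p) (hp0 : p ≤ 0) (hg : ContinuousOn g (Ioo a b))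
    (hlow : ∀ s ∈ Ioo a b, c * (b - s) ≤ g s) :
    IntervalIntegrable (fun s => g s ^ p) volume a b := by
  have hlow_pos : ∀ s ∈ Ioo a b, 0 < c * (b - s) := fun s hs => mul_pos hc (sub_pos.2 hs.2)
  rw [intervalIntegrable_iff_integrableOn_Ioo_of_le hab]
  have hdom : IntegrableOn (fun s => c ^ p * (b - s) ^ p) (Ioo a b) := by
    have h := ((intervalIntegral.intervalIntegrable_rpow' hp (a := b - a) (b := 0)).comp_sub_left
      b).const_mul (c ^ p)
    simp only [sub_sub_cancel, sub_zero] at h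
    exact (intervalIntegrable_iff_integrableOn_Ioo_of_le hab).mp h
  have hmeas : AEStronglyMeasurable (fun s => g s ^ p) (volume.restrict (Ioo a b)) :=
    (hg.rpow_const fun s hs => Or.inl ((hlow_pos s hs).trans_le (hlow s hs)).ne')
      |>.aestronglyMeasurable measurableSet_Ioo
  refine hdom.mono' hmeas ?_
  filter_upwards [ae_restrict_mem measurableSet_Ioo] with s hs
  rw [Real.norm_of_nonneg (Real.rpow_nonneg ((hlow_pos s hs).le.trans (hlow s hs)) p),
    ← Real.mul_rpow hc.le (sub_pos.2 hs.2).le]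
  exact Real.rpow_le_rpow_of_nonpos (hlow_pos s hs) (hlow s hs) hp0

section ScaledIntegral

variable {f : ℝ → ℝ} {M σ : ℝ}

lemma continuousOn_comp_const_mul (hf : ContinuousOn f (Ici 0)) (hM : 0 ≤ M) :
    ContinuousOn (fun τ => f (M * τ)) (Ici 0) :=
  hf.comp (continuousOn_const.mul continuousOn_id) fun _ hτ => mul_nonneg hM hτ

lemma intervalIntegrable_comp_const_mul (hf : ContinuousOn f (Ici 0)) (hM : 0 ≤ M)
    {a b : ℝ} (ha : 0 ≤ a) (hb : 0 ≤ b) :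
    IntervalIntegrable (fun τ => f (M * τ)) volume a b :=
  ((continuousOn_comp_const_mul hf hM).mono fun _ hτ =>
    le_trans (le_min ha hb) hτ.1).intervalIntegrable

lemma continuousOn_integral_comp_const_mul (hf : ContinuousOn f (Ici 0)) (hM : 0 ≤ M) :
    ContinuousOn (fun σ => ∫ τ in σ..1, f (M * τ)) (Icc 0 1) := by
  have hint : IntegrableOn (fun τ => f (M * τ)) (uIcc 0 1) := by
    rw [uIcc_of_le zero_le_one]
    exact ((continuousOn_comp_const_mul hf hM).mono Icc_subset_Ici_self).integrableOn_Icc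
  have h := intervalIntegral.continuousOn_primitive_interval_left hint
  rwa [uIcc_of_le zero_le_one] at h

lemma mul_one_sub_le_integral_comp_const_mul (hf : ContinuousOn f (Ici 0))
    (hanti : AntitoneOn f (Ici 0)) (hM : 0 ≤ M) (hσ0 : 0 ≤ σ) (hσ1 : σ ≤ 1) :
    f M * (1 - σ) ≤ ∫ τ in σ..1, f (M * τ) := by
  calc f M * (1 - σ) = ∫ _ in σ..1, f M := by simp [mul_comm]
    _ ≤ ∫ τ in σ..1, f (M * τ) :=
      intervalIntegral.integral_mono_on hσ1 intervalIntegrable_const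
        (intervalIntegrable_comp_const_mul hf hM hσ0 zero_le_one) fun τ hτ =>
          hanti (mul_nonneg hM (hσ0.trans hτ.1)) hM (mul_le_of_le_one_right hM hτ.2)

lemma antitoneOn_integral_comp_mul (hf : ContinuousOn f (Ici 0))
    (hanti : AntitoneOn f (Ici 0)) (hσ0 : 0 ≤ σ) (hσ1 : σ ≤ 1) :
    AntitoneOn (fun M => ∫ τ in σ..1, f (M * τ)) (Ici 0) := fun _ hM₁ _ hM₂ h =>
  intervalIntegral.integral_mono_on hσ1
    (intervalIntegrable_comp_const_mul hf hM₂ hσ0 zero_le_one)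
    (intervalIntegrable_comp_const_mul hf hM₁ hσ0 zero_le_one) fun τ hτ =>
      have hτ0 : 0 ≤ τ := hσ0.trans hτ.1
      hanti (mul_nonneg hM₁ hτ0) (mul_nonneg hM₂ hτ0) (mul_le_mul_of_nonneg_right h hτ0)

end ScaledIntegral

noncomputable def timeMap (F : ℝ → ℝ) (p M : ℝ) : ℝ :=
  ∫ s in (0 : ℝ)..M, (F s - F M) ^ p

noncomputable def rescaledTimeMap (f : ℝ → ℝ) (p M : ℝ) : ℝ :=
  ∫ σ in (0 : ℝ)..1, (∫ τ in σ..1, f (M * τ)) ^ p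

section TimeMap

variable {f F : ℝ → ℝ} {p M : ℝ}

lemma timeMap_eq_rpow_mul_rescaledTimeMap
    (hF : ∀ a b, 0 ≤ a → a ≤ b → F a - F b = ∫ x in a..b, f x)
    (hf0 : ∀ s, 0 ≤ s → 0 ≤ f s) (hM : 0 < M) :
    timeMap F p M = M ^ (1 + p) * rescaledTimeMap f p M := by
  have hscale : ∀ σ ∈ uIcc (0 : ℝ) 1,
      (F (M * σ) - F M) ^ p = M ^ p * (∫ τ in σ..1, f (M * τ)) ^ p := by
    intro σ hσ
    rw [uIcc_of_le zero_le_one] at hσ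
    have htail : F (M * σ) - F M = M * ∫ τ in σ..1, f (M * τ) := by
      rw [hF _ _ (mul_nonneg hM.le hσ.1) (mul_le_of_le_one_right hM.le hσ.2),
        intervalIntegral.integral_comp_mul_left f hM.ne', mul_one, smul_eq_mul,
        mul_inv_cancel_left₀ hM.ne']
    rw [htail, Real.mul_rpow hM.le (intervalIntegral.integral_nonneg hσ.2 fun τ hτ =>
      hf0 _ (mul_nonneg hM.le (hσ.1.trans hτ.1)))]
  have hsubst := intervalIntegral.integral_comp_mul_left (fun s => (F s - F M) ^ p) hM.ne'
    (a := 0) (b := 1)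
  rw [mul_zero, mul_one, smul_eq_mul, intervalIntegral.integral_congr hscale,
    intervalIntegral.integral_const_mul, eq_inv_mul_iff_mul_eq₀ hM.ne'] at hsubst
  rw [timeMap, rescaledTimeMap, ← hsubst, Real.rpow_add hM, Real.rpow_one, mul_assoc]

lemma intervalIntegrable_rescaledTimeMap_integrand (hcont : ContinuousOn f (Ici 0))
    (hpos : ∀ s, 0 ≤ s → 0 < f s) (hanti : AntitoneOn f (Ici 0)) (hp : -1 < p) (hp0 : p ≤ 0)
    (hM : 0 < M) :
    IntervalIntegrable (fun σ => (∫ τ in σ..1, f (M * τ)) ^ p) volume 0 1 :=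
  intervalIntegrable_rpow_of_mul_sub_le zero_le_one (hpos M hM.le) hp hp0
    ((continuousOn_integral_comp_const_mul hcont hM.le).mono Ioo_subset_Icc_self)
    fun _ hσ => mul_one_sub_le_integral_comp_const_mul hcont hanti hM.le hσ.1.le hσ.2.le

lemma rescaledTimeMap_pos (hcont : ContinuousOn f (Ici 0)) (hpos : ∀ s, 0 ≤ s → 0 < f s)
    (hanti : AntitoneOn f (Ici 0)) (hp : -1 < p) (hp0 : p ≤ 0) (hM : 0 < M) :
    0 < rescaledTimeMap f p M :=
  intervalIntegral.intervalIntegral_pos_of_pos_on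
    (intervalIntegrable_rescaledTimeMap_integrand hcont hpos hanti hp hp0 hM)
    (fun _ hσ => Real.rpow_pos_of_pos ((mul_pos (hpos M hM.le) (sub_pos.2 hσ.2)).trans_le
      (mul_one_sub_le_integral_comp_const_mul hcont hanti hM.le hσ.1.le hσ.2.le)) p)
    zero_lt_one

lemma monotoneOn_rescaledTimeMap (hcont : ContinuousOn f (Ici 0))
    (hpos : ∀ s, 0 ≤ s → 0 < f s) (hanti : AntitoneOn f (Ici 0)) (hp : -1 < p) (hp0 : p ≤ 0) :
    MonotoneOn (rescaledTimeMap f p) (Ioi 0) := by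
  intro M₁ (hM₁ : 0 < M₁) M₂ (hM₂ : 0 < M₂) h
  refine intervalIntegral.integral_mono_on zero_le_one
    (intervalIntegrable_rescaledTimeMap_integrand hcont hpos hanti hp hp0 hM₁)
    (intervalIntegrable_rescaledTimeMap_integrand hcont hpos hanti hp hp0 hM₂) fun σ hσ => ?_
  rcases hσ.2.lt_or_eq with hσ1 | rfl
  · have hpos₂ : 0 < ∫ τ in σ..1, f (M₂ * τ) :=
      (mul_pos (hpos M₂ hM₂.le) (sub_pos.2 hσ1)).trans_le
        (mul_one_sub_le_integral_comp_const_mul hcont hanti hM₂.le hσ.1 hσ1.le)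
    exact Real.rpow_le_rpow_of_nonpos hpos₂
      (antitoneOn_integral_comp_mul hcont hanti hσ.1 hσ1.le hM₁.le hM₂.le h) hp0
  · simp

theorem strictMonoOn_timeMap (hF : ∀ a b, 0 ≤ a → a ≤ b → F a - F b = ∫ x in a..b, f x)
    (hcont : ContinuousOn f (Ici 0)) (hpos : ∀ s, 0 ≤ s → 0 < f s)
    (hanti : AntitoneOn f (Ici 0)) (hp : -1 < p) (hp0 : p ≤ 0) :
    StrictMonoOn (timeMap F p) (Ioi 0) := by
  intro M₁ (hM₁ : 0 < M₁) M₂ (hM₂ : 0 < M₂) h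
  have hf0 : ∀ s, 0 ≤ s → 0 ≤ f s := fun s hs => (hpos s hs).le
  rw [timeMap_eq_rpow_mul_rescaledTimeMap hF hf0 hM₁,
    timeMap_eq_rpow_mul_rescaledTimeMap hF hf0 hM₂]
  exact mul_lt_mul (Real.rpow_lt_rpow hM₁.le h (by linarith))
    (monotoneOn_rescaledTimeMap hcont hpos hanti hp hp0 hM₁ hM₂ h.le)
    (rescaledTimeMap_pos hcont hpos hanti hp hp0 hM₁) (by positivity)

theorem tendsto_timeMap_atTop (hF : ∀ a b, 0 ≤ a → a ≤ b → F a - F b = ∫ x in a..b, f x)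
    (hcont : ContinuousOn f (Ici 0)) (hpos : ∀ s, 0 ≤ s → 0 < f s)
    (hanti : AntitoneOn f (Ici 0)) (hp : -1 < p) (hp0 : p ≤ 0) :
    Tendsto (timeMap F p) atTop atTop := by
  refine tendsto_atTop_mono' atTop ?_
    ((tendsto_rpow_atTop (by linarith : 0 < 1 + p)).atTop_mul_const
      (rescaledTimeMap_pos hcont hpos hanti hp hp0 one_pos))
  filter_upwards [eventually_ge_atTop 1] with M hM
  have hM0 : 0 < M := by linarith
  rw [timeMap_eq_rpow_mul_rescaledTimeMap hF (fun s hs => (hpos s hs).le) hM0]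
  exact mul_le_mul_of_nonneg_left
    (monotoneOn_rescaledTimeMap hcont hpos hanti hp hp0 (mem_Ioi.2 one_pos) hM0 hM)
    (by positivity)

end TimeMap

lemma strictMonoOn_of_sqrt_eq {α : Type*} [Preorder α] {s : Set α} {μ g : α → ℝ}
    (hμ0 : ∀ x ∈ s, 0 ≤ μ x) (hμ : ∀ x ∈ s, Real.sqrt (μ x) = g x) (hg : StrictMonoOn g s) :
    StrictMonoOn μ s := fun x hx y hy h =>
  (Real.sqrt_lt_sqrt_iff (hμ0 x hx)).1 (by rw [hμ x hx, hμ y hy]; exact hg hx hy h)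

lemma tendsto_atTop_of_sqrt_eq {α : Type*} {l : Filter α} {μ g : α → ℝ}
    (hμ0 : ∀ᶠ x in l, 0 ≤ μ x) (hμ : ∀ᶠ x in l, Real.sqrt (μ x) = g x)
    (hg : Tendsto g l atTop) : Tendsto μ l atTop := by
  refine ((tendsto_pow_atTop two_ne_zero).comp hg).congr' ?_
  filter_upwards [hμ0, hμ] with x h0 h
  rw [Function.comp_apply, ← h, Real.sq_sqrt h0]

theorem stmt_17 (f F μ : ℝ → ℝ)
    (hcont : ContinuousOn f (Ici 0))
    (hpos : ∀ s, 0 ≤ s → 0 < f s)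
    (hanti : StrictAntiOn f (Ici 0))
    (hint : IntegrableOn f (Ici 0))
    (hF : ∀ s, F s = ∫ σ in Ioi s, f σ)
    (hμnonneg : ∀ M, 0 < M → 0 ≤ μ M)
    (hμ : ∀ M, 0 < M →
      Real.sqrt (μ M) = (Real.sqrt 2 / 2) * ∫ s in (0:ℝ)..M, (F s - F M) ^ (-(1/2) : ℝ)) :
    StrictMonoOn μ (Ioi 0) ∧ Tendsto μ atTop atTop := by
  have hFsub : ∀ a b, 0 ≤ a → a ≤ b → F a - F b = ∫ x in a..b, f x := fun a b ha hab => by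
    rw [hF, hF]
    exact intervalIntegral.integral_Ioi_sub_Ioi (hint.mono_set (Ioi_subset_Ici ha)) hab
  have hp : (-1 : ℝ) < -(1 / 2) := by norm_num
  have hp0 : (-(1 / 2) : ℝ) ≤ 0 := by norm_num
  have hc : 0 < Real.sqrt 2 / 2 := by positivity
  have hsqrt : ∀ M ∈ Ioi (0 : ℝ), Real.sqrt (μ M) = Real.sqrt 2 / 2 * timeMap F (-(1 / 2)) M := hμ
  constructor
  · refine strictMonoOn_of_sqrt_eq hμnonneg hsqrt fun M₁ hM₁ M₂ hM₂ h => ?_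
    exact mul_lt_mul_of_pos_left
      (strictMonoOn_timeMap hFsub hcont hpos hanti.antitoneOn hp hp0 hM₁ hM₂ h) hc
  · exact tendsto_atTop_of_sqrt_eq ((eventually_gt_atTop 0).mono hμnonneg)
      ((eventually_gt_atTop 0).mono hsqrt)
      ((tendsto_timeMap_atTop hFsub hcont hpos hanti.antitoneOn hp hp0).const_mul_atTop hc)
end

section
/- Let f be continuous, positive, strictly decreasing on [0,∞) with ∫₀^∞ f = 1, F(s) = ∫_s^∞ f, and √(μ(M)) = (√2/2) ∫₀^M (F(s) − F(M))^{−1/2} ds. Define g(M) = f(M)√(μ(M))/F(M). For f(s) = b(1+s)^{−1−b} with b > 0, one has liminf_{M→∞} μ(M) f(M)/M > 0. -/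
/-!
Here `F s = (1 + s)^(-b)` and `f = -F'`. By the mean value theorem
`F s - F M ≥ f M * (M - s)` on `[0, M]`, so
`√μ(M) ≤ (√2/2) ∫₀^M (f M (M - s))^(-1/2) ds = √(2M / f M)`, i.e. `μ f / M ≤ 2`.
Conversely `F s - F M ≤ F s` gives `√μ(M) ≥ (√2/2) ∫₀^M (1 + s)^(b/2) ds ≈ M^(b/2+1)`,
and then `μ f / M ≥ b / (2 (b + 2)²)` for `M ≥ 1`.
-/

open MeasureTheory Set Filter Topology

lemma intervalIntegrable_sub_rpow {M p : ℝ} (hp : -1 < p) :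
    IntervalIntegrable (fun s => (M - s) ^ p) volume 0 M := by
  simpa using
    ((intervalIntegral.intervalIntegrable_rpow' (a := 0) (b := M) hp).comp_sub_left M).symm

lemma integral_sub_rpow {M p : ℝ} (hp : -1 < p) :
    ∫ s in (0:ℝ)..M, (M - s) ^ p = M ^ (p + 1) / (p + 1) := by
  rw [intervalIntegral.integral_comp_sub_left (fun x => x ^ p), sub_self, sub_zero,
    integral_rpow (Or.inl hp), Real.zero_rpow (by linarith), sub_zero]

lemma intervalIntegral_rpow_le_of_mul_sub_le {G : ℝ → ℝ} {K M p : ℝ} (hG : Measurable G)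
    (hK : 0 < K) (hM : 0 ≤ M) (hp : -1 < p) (hp0 : p ≤ 0)
    (hGM : ∀ s ∈ Ioo 0 M, K * (M - s) ≤ G s) :
    IntervalIntegrable (fun s => G s ^ p) volume 0 M ∧
      ∫ s in (0:ℝ)..M, G s ^ p ≤ K ^ p * (M ^ (p + 1) / (p + 1)) := by
  have hpt : ∀ s ∈ Ioo 0 M, G s ^ p ≤ K ^ p * (M - s) ^ p := fun s hs => by
    rw [← Real.mul_rpow hK.le (sub_pos.2 hs.2).le]
    exact Real.rpow_le_rpow_of_nonpos (mul_pos hK (sub_pos.2 hs.2)) (hGM s hs) hp0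
  have hdom := (intervalIntegrable_sub_rpow (M := M) hp).const_mul (K ^ p)
  rw [intervalIntegrable_iff_integrableOn_Ioo_of_le hM] at hdom ⊢
  have hint : IntegrableOn (fun s => G s ^ p) (Ioo 0 M) := by
    refine hdom.mono' (hG.pow_const p).aestronglyMeasurable
      (ae_restrict_of_forall_mem measurableSet_Ioo fun s hs => ?_)
    rw [Real.norm_of_nonneg (Real.rpow_nonneg
      ((mul_pos hK (sub_pos.2 hs.2)).le.trans (hGM s hs)) p)]
    exact hpt s hs
  refine ⟨hint, ?_⟩
  rw [← integral_sub_rpow hp, ← intervalIntegral.integral_const_mul,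
    intervalIntegral.integral_of_le hM, intervalIntegral.integral_of_le hM,
    integral_Ioc_eq_integral_Ioo, integral_Ioc_eq_integral_Ioo]
  exact setIntegral_mono_on hint hdom measurableSet_Ioo hpt

lemma integral_one_add_rpow {r : ℝ} (hr : -1 < r) (M : ℝ) :
    ∫ s in (0:ℝ)..M, (1 + s) ^ r = ((1 + M) ^ (r + 1) - 1) / (r + 1) := by
  rw [intervalIntegral.integral_comp_add_left (fun x => x ^ r), add_zero,
    integral_rpow (Or.inl hr), Real.one_rpow]

/- The upper bound `C` matters: for `u` unbounded above, `liminf` is a junk value. -/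
lemma le_liminf_of_eventually_mem_Icc {α : Type*} {l : Filter α} [l.NeBot] {u : α → ℝ}
    {c C : ℝ} (h : ∀ᶠ x in l, u x ∈ Icc c C) : c ≤ l.liminf u :=
  le_liminf_of_le (isBoundedUnder_of_eventually_le (h.mono fun _ hx => hx.2)).isCoboundedUnder_ge
    (h.mono fun _ hx => hx.1)

lemma hasDerivAt_neg_one_add_rpow_neg (b : ℝ) {x : ℝ} (hx : -1 < x) :
    HasDerivAt (fun t : ℝ => -(1 + t) ^ (-b)) (b * (1 + x) ^ (-1 - b)) x := by
  have := (((hasDerivAt_id' x).const_add 1).rpow_const (p := -b) (Or.inl (by linarith))).neg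
  rw [show -b - 1 = -1 - b by ring, one_mul, neg_mul, neg_neg] at this
  exact this

lemma integral_Ioi_mul_one_add_rpow {b s : ℝ} (hb : 0 < b) (hs : -1 < s) :
    ∫ σ in Ioi s, b * (1 + σ) ^ (-1 - b) = (1 + s) ^ (-b) := by
  have hderiv : ∀ x ∈ Ici s, HasDerivAt (fun t : ℝ => -(1 + t) ^ (-b))
      (b * (1 + x) ^ (-1 - b)) x := fun x hx =>
    hasDerivAt_neg_one_add_rpow_neg b (hs.trans_le hx)
  have htend : Tendsto (fun t : ℝ => -(1 + t) ^ (-b)) atTop (𝓝 0) := by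
    simpa using
      ((tendsto_rpow_neg_atTop hb).comp (tendsto_atTop_add_const_left atTop 1 tendsto_id)).neg
  have hint : IntegrableOn (fun x => b * (1 + x) ^ (-1 - b)) (Ioi s) :=
    integrableOn_Ioi_deriv_of_nonneg' hderiv
      (fun x hx => mul_nonneg hb.le (Real.rpow_nonneg (by linarith [hs.trans hx]) _)) htend
  rw [integral_Ioi_of_hasDerivAt_of_tendsto' hderiv hint htend]
  ring

lemma mul_sub_le_one_add_rpow_neg_sub {b s M : ℝ} (hb : 0 < b) (hs : -1 < s) (hsM : s ≤ M) :
    b * (1 + M) ^ (-1 - b) * (M - s) ≤ (1 + s) ^ (-b) - (1 + M) ^ (-b) := by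
  have hderiv : ∀ x ∈ Ioc (-1) M, HasDerivAt (fun t : ℝ => -(1 + t) ^ (-b))
      (b * (1 + x) ^ (-1 - b)) x := fun x hx => hasDerivAt_neg_one_add_rpow_neg b hx.1
  have := (convex_Ioc (-1) M).mul_sub_le_image_sub_of_le_deriv
    (fun x hx => (hderiv x hx).continuousAt.continuousWithinAt)
    (fun x hx => (hderiv x (interior_subset hx)).differentiableAt.differentiableWithinAt)
    (C := b * (1 + M) ^ (-1 - b)) (fun x hx => by
      rw [interior_Ioc] at hx
      rw [(hderiv x (Ioo_subset_Ioc_self hx)).deriv]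
      exact mul_le_mul_of_nonneg_left (Real.rpow_le_rpow_of_nonpos (by linarith [hx.1])
        (by linarith [hx.2]) (by linarith)) hb.le)
    s ⟨hs, hsM⟩ M ⟨hs.trans_le hsM, le_rfl⟩ hsM
  linarith

/- The integral in the time map for `F s = (1 + s) ^ (-b)`:
`√μ(M) = (√2/2) * timeMapIntegral b M`. -/
noncomputable def timeMapIntegral (b M : ℝ) : ℝ :=
  ∫ s in (0:ℝ)..M, ((1 + s) ^ (-b) - (1 + M) ^ (-b)) ^ (-(1 / 2) : ℝ)

lemma intervalIntegrable_and_timeMapIntegral_le {b M : ℝ} (hb : 0 < b) (hM : 0 ≤ M) :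
    IntervalIntegrable (fun s => ((1 + s) ^ (-b) - (1 + M) ^ (-b)) ^ (-(1 / 2) : ℝ))
        volume 0 M ∧
      timeMapIntegral b M ≤ 2 * √(M / (b * (1 + M) ^ (-1 - b))) := by
  have hK : 0 < b * (1 + M) ^ (-1 - b) := mul_pos hb (Real.rpow_pos_of_pos (by linarith) _)
  obtain ⟨hint, hle⟩ := intervalIntegral_rpow_le_of_mul_sub_le (p := -(1 / 2)) (by fun_prop) hK
    hM (by norm_num) (by norm_num)
    (fun s hs => mul_sub_le_one_add_rpow_neg_sub hb (by linarith [hs.1]) hs.2.le)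
  refine ⟨hint, hle.trans_eq ?_⟩
  rw [Real.sqrt_div' _ hK.le, Real.rpow_neg hK.le, Real.sqrt_eq_rpow, Real.sqrt_eq_rpow]
  norm_num
  ring

lemma one_add_rpow_neg_sub_pos {b s M : ℝ} (hb : 0 < b) (hs : -1 < s) (hsM : s < M) :
    0 < (1 + s) ^ (-b) - (1 + M) ^ (-b) := by
  have hM : 0 < 1 + M := by linarith
  have : 0 < M - s := by linarith
  exact (by positivity : 0 < b * (1 + M) ^ (-1 - b) * (M - s)).trans_le
    (mul_sub_le_one_add_rpow_neg_sub hb hs hsM.le)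

lemma one_add_rpow_div_le_timeMapIntegral {b M : ℝ} (hb : 0 < b) (hM : 0 ≤ M) :
    ((1 + M) ^ (b / 2 + 1) - 1) / (b / 2 + 1) ≤ timeMapIntegral b M := by
  rw [← integral_one_add_rpow (by linarith) M]
  refine intervalIntegral.integral_mono_on_of_le_Ioo hM ?_
    (intervalIntegrable_and_timeMapIntegral_le hb hM).1 fun s hs => ?_
  · exact (continuousOn_const.add continuousOn_id).rpow_const (fun _ _ => Or.inr (by positivity))
      |>.intervalIntegrable
  have hs0 : 0 < 1 + s := by linarith [hs.1]
  have hM0 : 0 < (1 + M) ^ (-b) := Real.rpow_pos_of_pos (by linarith) _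
  calc (1 + s) ^ (b / 2) = ((1 + s) ^ (-b)) ^ (-(1 / 2) : ℝ) := by
        rw [← Real.rpow_mul hs0.le]; ring_nf
    _ ≤ ((1 + s) ^ (-b) - (1 + M) ^ (-b)) ^ (-(1 / 2) : ℝ) :=
        Real.rpow_le_rpow_of_nonpos (one_add_rpow_neg_sub_pos hb (by linarith [hs.1]) hs.2)
          (by linarith) (by norm_num)

lemma timeMapIntegral_nonneg {b M : ℝ} (hb : 0 < b) (hM : 0 ≤ M) : 0 ≤ timeMapIntegral b M :=
  le_trans (div_nonneg (sub_nonneg.2 (Real.one_le_rpow (by linarith) (by linarith))) (by linarith))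
    (one_add_rpow_div_le_timeMapIntegral hb hM)

lemma sq_timeMapIntegral_mul_le {b M : ℝ} (hb : 0 < b) (hM : 0 ≤ M) :
    timeMapIntegral b M ^ 2 * (b * (1 + M) ^ (-1 - b)) ≤ 4 * M := by
  set K := b * (1 + M) ^ (-1 - b)
  have hK : 0 < K := mul_pos hb (Real.rpow_pos_of_pos (by linarith) _)
  calc timeMapIntegral b M ^ 2 * K ≤ (2 * √(M / K)) ^ 2 * K := by
        gcongr
        · exact timeMapIntegral_nonneg hb hM
        · exact (intervalIntegrable_and_timeMapIntegral_le hb hM).2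
    _ = 4 * M := by
        rw [mul_pow, Real.sq_sqrt (by positivity)]
        field_simp
        ring

lemma mul_div_le_sq_timeMapIntegral_mul {b M : ℝ} (hb : 0 < b) (hM : 1 ≤ M) :
    b * M / (b + 2) ^ 2 ≤ timeMapIntegral b M ^ 2 * (b * (1 + M) ^ (-1 - b)) := by
  have hM1 : 0 < 1 + M := by linarith
  have htwo : 2 ≤ (1 + M) ^ (b / 2 + 1) := calc
    (2 : ℝ) ≤ (1 + M) ^ (1 : ℝ) := by rw [Real.rpow_one]; linarith
    _ ≤ (1 + M) ^ (b / 2 + 1) := Real.rpow_le_rpow_of_exponent_le (by linarith) (by linarith)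
  have hI : (1 + M) ^ (b / 2 + 1) / (b + 2) ≤ timeMapIntegral b M := by
    refine le_trans ?_ (one_add_rpow_div_le_timeMapIntegral hb (by linarith))
    rw [div_le_div_iff₀ (by linarith) (by linarith)]
    nlinarith
  have hpow : ((1 + M) ^ (b / 2 + 1)) ^ 2 * (1 + M) ^ (-1 - b) = 1 + M := by
    rw [← Real.rpow_natCast, ← Real.rpow_mul hM1.le, ← Real.rpow_add hM1]
    norm_num; ring_nf; exact Real.rpow_one _
  calc b * M / (b + 2) ^ 2 ≤ b * (1 + M) / (b + 2) ^ 2 := by gcongr; linarith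
    _ = b * (((1 + M) ^ (b / 2 + 1)) ^ 2 * (1 + M) ^ (-1 - b)) / (b + 2) ^ 2 := by rw [hpow]
    _ = ((1 + M) ^ (b / 2 + 1) / (b + 2)) ^ 2 * (b * (1 + M) ^ (-1 - b)) := by
        rw [div_pow]; ring
    _ ≤ timeMapIntegral b M ^ 2 * (b * (1 + M) ^ (-1 - b)) := by gcongr

theorem stmt_19_general (b : ℝ) (hb : 0 < b)
    (f F μ : ℝ → ℝ)
    (hf : ∀ s, 0 ≤ s → f s = b * (1 + s) ^ (-1 - b : ℝ))
    (hF : ∀ s, F s = ∫ σ in Ioi s, f σ)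
    (hμ : ∀ M, 0 < M →
      Real.sqrt (μ M) = (Real.sqrt 2 / 2) * ∫ s in (0:ℝ)..M, (F s - F M) ^ (-(1/2) : ℝ)) :
    0 < Filter.atTop.liminf fun M => μ M * f M / M := by
  have hF_eq : ∀ s, 0 ≤ s → F s = (1 + s) ^ (-b) := fun s hs => by
    rw [hF s, setIntegral_congr_fun measurableSet_Ioi fun σ hσ => hf σ (hs.trans hσ.le)]
    exact integral_Ioi_mul_one_add_rpow hb (by linarith)
  have hsqrt : ∀ M, 0 < M → √(μ M) = √2 / 2 * timeMapIntegral b M := fun M hM => by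
    rw [hμ M hM, timeMapIntegral]
    congr 1
    refine intervalIntegral.integral_congr_Ioo_of_le hM.le fun s hs => ?_
    simp only [hF_eq s hs.1.le, hF_eq M hM.le]
  refine (div_pos hb (by positivity : (0:ℝ) < 2 * (b + 2) ^ 2)).trans_le
    (le_liminf_of_eventually_mem_Icc (C := 2) ?_)
  filter_upwards [eventually_ge_atTop 1] with M hM
  have hM0 : 0 < M := by linarith
  have hlow := mul_div_le_sq_timeMapIntegral_mul hb hM
  have hI : timeMapIntegral b M ≠ 0 := by
    rintro h
    rw [h, zero_pow two_ne_zero, zero_mul] at hlow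
    exact absurd hlow (not_le.2 (by positivity))
  have hμ_eq : μ M = timeMapIntegral b M ^ 2 / 2 := by
    have hμpos : 0 < μ M := Real.sqrt_ne_zero'.1 (by
      rw [hsqrt M hM0]; exact mul_ne_zero (by positivity) hI)
    rw [← Real.sq_sqrt hμpos.le, hsqrt M hM0, mul_pow, div_pow, Real.sq_sqrt zero_le_two]
    ring
  have hval : μ M * f M / M = timeMapIntegral b M ^ 2 * (b * (1 + M) ^ (-1 - b)) / (2 * M) := by
    rw [hμ_eq, hf M hM0.le]; ring
  rw [hval, mem_Icc, le_div_iff₀ (by positivity), div_le_iff₀ (by positivity)]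
  constructor
  · refine le_trans (le_of_eq ?_) hlow
    field_simp
  · linarith [sq_timeMapIntegral_mul_le hb hM0.le]

theorem stmt_19 (b : ℝ) (hb : 0 < b)
    (f F μ : ℝ → ℝ)
    (hf : ∀ s, 0 ≤ s → f s = b * (1 + s) ^ (-1 - b : ℝ))
    (hF : ∀ s, F s = ∫ σ in Ioi s, f σ)
    (hμnonneg : ∀ M, 0 < M → 0 ≤ μ M)
    (hμ : ∀ M, 0 < M →
      Real.sqrt (μ M) = (Real.sqrt 2 / 2) * ∫ s in (0:ℝ)..M, (F s - F M) ^ (-(1/2) : ℝ)) :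
    0 < Filter.atTop.liminf fun M => μ M * f M / M :=
  stmt_19_general b hb f F μ hf hF hμ
end
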